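/- Let U ⊆ ℝ² be open and w : U → ℝ a smooth solution of the reduced equation with ∂₂²w ≠ 0 and ∂₁∂₂²w ≠ 0 on U. Define θ⁰ := z₂ − z₁·∂₂²w and recursively θ^{k+1} := (∂₂²w/∂₁∂₂²w)·∂₂θ^k for k ≥ 0, and assume θ² ≠ 0 on U. Fix m ∈ ℕ and a smooth function ϱ̂ : ℝ^{m+2} → ℝ of arguments (v, t₀, …, t_m). Then the function f := (∂₂²w/(∂₁∂₂²w·θ²))·((∂ϱ̂/∂v)(∂₂²w, θ⁰, …, θ^m) − Σ_{k=0}^{m} θ^{k+1}·(∂ϱ̂/∂t_k)(∂₂²w, θ⁰, …, θ^m)) + ϱ̂(∂₂²w, θ⁰, …, θ^m) satisfies the generalized-symmetry condition ∂₂(∂₁(∂₂f) + (∂₂²w)·∂₂(∂₂f)) = 0 on U. -/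

import Mathlib

/-!
Write `h = ∂₂²w` and `D = ∂₁ + h ∂₂` (`charDeriv h`). The reduced equation says `D h = 0`, i.e. `h`
solves the Burgers equation, and the symmetry condition is `∂₂ (D ∂₂f) = 0`, so it suffices to
show `D ∂₂f = 0`. The commutator `[D, ∂₂] = -(∂₂h) ∂₂` gives `D ∂₂h = -(∂₂h)²` and
`∂₂θᵏ = -(∂₂h) θᵏ⁺¹`, and then `D θᵏ = 0` by induction. Hence `R = ϱ̂(h, θ⁰, …, θᵐ)` is
`D`-invariant with `∂₂R = ∂₂h · (∂ᵥϱ̂ - ∑ θᵏ⁺¹ ∂ₜₖϱ̂)`, and `θ² = -∂₂²h/(∂₂h)³`, so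
`f = R + (∂₂h/∂₂²h) ∂₂R`. For any invariant `R`, `T = (∂₂h/∂₂²h) ∂₂R` satisfies `D T = ∂₂h · T`,
so `D ∂₂T = ∂₂²h · T = ∂₂h · ∂₂R`, which cancels `D ∂₂R = -∂₂h · ∂₂R`.
-/

/-- First-coordinate partial derivative of a function on `ℝ²`. -/
noncomputable def d1 (f : ℝ × ℝ → ℝ) (p : ℝ × ℝ) : ℝ := deriv (fun s => f (s, p.2)) p.1

/-- Second-coordinate partial derivative of a function on `ℝ²`. -/
noncomputable def d2 (f : ℝ × ℝ → ℝ) (p : ℝ × ℝ) : ℝ := deriv (fun s => f (p.1, s)) p.2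

/-- `w` is a smooth solution of the reduced equation `∂₁∂₂²w + (∂₂²w)·(∂₂³w) = 0` on `U`. -/
def IsRedSolOn (w : ℝ × ℝ → ℝ) (U : Set (ℝ × ℝ)) : Prop :=
  ContDiffOn ℝ (⊤ : ℕ∞) w U ∧
    ∀ p ∈ U, d1 (d2 (d2 w)) p + d2 (d2 w) p * d2 (d2 (d2 w)) p = 0

/-- `h` is a smooth solution of the inviscid Burgers equation `∂₁h + h·∂₂h = 0` on `U`. -/
def IsBurgersSolOn (h : ℝ × ℝ → ℝ) (U : Set (ℝ × ℝ)) : Prop :=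
  ContDiffOn ℝ (⊤ : ℕ∞) h U ∧ ∀ p ∈ U, d1 h p + h p * d2 h p = 0

/-- The lowest-order `z₂`-integral `ζ = ∂₁∂₂w + ½(∂₂²w)²` of the reduced equation. -/
noncomputable def zetaInt (w : ℝ × ℝ → ℝ) (p : ℝ × ℝ) : ℝ :=
  d1 (d2 w) p + (1 / 2) * (d2 (d2 w) p) ^ 2

/-- `θ⁰ = z₂ − z₁·∂₂²w`. -/
noncomputable def theta0 (w : ℝ × ℝ → ℝ) (p : ℝ × ℝ) : ℝ := p.2 - p.1 * d2 (d2 w) p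

/-- `θ¹ = ∂₂²w/∂₁∂₂²w + z₁`. -/
noncomputable def theta1 (w : ℝ × ℝ → ℝ) (p : ℝ × ℝ) : ℝ :=
  d2 (d2 w) p / d1 (d2 (d2 w)) p + p.1

/-- `θ² = (∂₂²w/∂₁∂₂²w)·∂₂θ¹`. -/
noncomputable def theta2 (w : ℝ × ℝ → ℝ) (p : ℝ × ℝ) : ℝ :=
  d2 (d2 w) p / d1 (d2 (d2 w)) p * d2 (theta1 w) p

/-- `f` satisfies the generalized-symmetry condition
`∂₂(∂₁(∂₂f) + (∂₂²w)·∂₂(∂₂f)) = 0` of the reduced equation along the solution `w` on `U`. -/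
def IsGenSymCharOn (w f : ℝ × ℝ → ℝ) (U : Set (ℝ × ℝ)) : Prop :=
  ∀ p ∈ U, d2 (fun q => d1 (d2 f) q + d2 (d2 w) q * d2 (d2 f) q) p = 0

/-- The sequence `θ⁰ = z₂ − z₁·∂₂²w`, `θ^{k+1} = (∂₂²w/∂₁∂₂²w)·∂₂θ^k`. -/
noncomputable def thetaSeq (w : ℝ × ℝ → ℝ) : ℕ → ℝ × ℝ → ℝ
  | 0 => fun p => p.2 - p.1 * d2 (d2 w) p
  | k + 1 => fun p => d2 (d2 w) p / d1 (d2 (d2 w)) p * d2 (thetaSeq w k) p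

/-- The argument vector `(∂₂²w, θ⁰, …, θ^m)` at a point `p`. -/
noncomputable def argvec (w : ℝ × ℝ → ℝ) (m : ℕ) (p : ℝ × ℝ) : Fin (m + 2) → ℝ :=
  Fin.cons (d2 (d2 w) p) fun j : Fin (m + 1) => thetaSeq w j p

/-- Partial derivative of a function of `m + 2` real arguments in its `i`-th argument. -/
noncomputable def pdArg {m : ℕ} (g : (Fin (m + 2) → ℝ) → ℝ) (i : Fin (m + 2))
    (a : Fin (m + 2) → ℝ) : ℝ := deriv (fun t => g (Function.update a i t)) (a i)

open Set
open scoped ContDiff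

theorem ContDiffOn.differentiableAt_of_mem {𝕜 E F : Type*} [NontriviallyNormedField 𝕜]
    [NormedAddCommGroup E] [NormedSpace 𝕜 E] [NormedAddCommGroup F] [NormedSpace 𝕜 F]
    {f : E → F} {s : Set E} {x : E} (hf : ContDiffOn 𝕜 ∞ f s) (hs : IsOpen s) (hx : x ∈ s) :
    DifferentiableAt 𝕜 f x :=
  (hf.contDiffAt (hs.mem_nhds hx)).differentiableAt (by simp)

section PartialDerivatives

variable {F G : ℝ × ℝ → ℝ} {U : Set (ℝ × ℝ)} {p : ℝ × ℝ}

theorem hasDerivAt_d1 (hF : DifferentiableAt ℝ F p) :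
    HasDerivAt (fun s => F (s, p.2)) (d1 F p) p.1 :=
  (hF.comp p.1 (differentiableAt_id.prodMk (differentiableAt_const _))).hasDerivAt

theorem hasDerivAt_d2 (hF : DifferentiableAt ℝ F p) :
    HasDerivAt (fun s => F (p.1, s)) (d2 F p) p.2 :=
  (hF.comp p.2 ((differentiableAt_const _).prodMk differentiableAt_id)).hasDerivAt

theorem d1_eq_fderiv (hF : DifferentiableAt ℝ F p) : d1 F p = fderiv ℝ F p (1, 0) :=
  (hF.hasFDerivAt.comp_hasDerivAt p.1 ((hasDerivAt_id _).prodMk (hasDerivAt_const _ _))).deriv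

theorem d2_eq_fderiv (hF : DifferentiableAt ℝ F p) : d2 F p = fderiv ℝ F p (0, 1) :=
  (hF.hasFDerivAt.comp_hasDerivAt p.2 ((hasDerivAt_const _ _).prodMk (hasDerivAt_id _))).deriv

theorem Set.EqOn.d1 (hFG : EqOn F G U) (hU : IsOpen U) : EqOn (d1 F) (d1 G) U := fun p hp =>
  Filter.EventuallyEq.deriv_eq <| Filter.eventually_of_mem
    ((hU.preimage (continuous_id.prodMk continuous_const)).mem_nhds (show (p.1, p.2) ∈ U from hp))
    fun _ hs => hFG hs

theorem Set.EqOn.d2 (hFG : EqOn F G U) (hU : IsOpen U) : EqOn (d2 F) (d2 G) U := fun p hp =>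
  Filter.EventuallyEq.deriv_eq <| Filter.eventually_of_mem
    ((hU.preimage (continuous_const.prodMk continuous_id)).mem_nhds (show (p.1, p.2) ∈ U from hp))
    fun _ hs => hFG hs

theorem d2_eq_zero_of_eqOn_zero (hF : EqOn F 0 U) (hU : IsOpen U) (hp : p ∈ U) :
    d2 F p = 0 := by
  rw [hF.d2 hU hp]
  simp [d2]

theorem ContDiffOn.d1 (hF : ContDiffOn ℝ ∞ F U) (hU : IsOpen U) : ContDiffOn ℝ ∞ (d1 F) U :=
  ((hF.fderiv_of_isOpen hU (by exact_mod_cast le_top)).clm_apply contDiffOn_const).congr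
    fun _ hq => d1_eq_fderiv (hF.differentiableAt_of_mem hU hq)

theorem ContDiffOn.d2 (hF : ContDiffOn ℝ ∞ F U) (hU : IsOpen U) : ContDiffOn ℝ ∞ (d2 F) U :=
  ((hF.fderiv_of_isOpen hU (by exact_mod_cast le_top)).clm_apply contDiffOn_const).congr
    fun _ hq => d2_eq_fderiv (hF.differentiableAt_of_mem hU hq)

theorem d1_d2_comm (hF : ContDiffOn ℝ ∞ F U) (hU : IsOpen U) (hp : p ∈ U) :
    d1 (d2 F) p = d2 (d1 F) p := by
  have hF' : ContDiffOn ℝ ∞ (fderiv ℝ F) U := hF.fderiv_of_isOpen hU (by exact_mod_cast le_top)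
  have hF'p : DifferentiableAt ℝ (fderiv ℝ F) p := hF'.differentiableAt_of_mem hU hp
  have hd1 : EqOn (d1 F) (fun q => fderiv ℝ F q (1, 0)) U := fun q hq =>
    d1_eq_fderiv (hF.differentiableAt_of_mem hU hq)
  have hd2 : EqOn (d2 F) (fun q => fderiv ℝ F q (0, 1)) U := fun q hq =>
    d2_eq_fderiv (hF.differentiableAt_of_mem hU hq)
  rw [hd2.d1 hU hp, hd1.d2 hU hp, d1_eq_fderiv (by fun_prop), d2_eq_fderiv (by fun_prop),
    fderiv_clm_apply hF'p (differentiableAt_const _),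
    fderiv_clm_apply hF'p (differentiableAt_const _)]
  have hsymm := (hF.contDiffAt (hU.mem_nhds hp)).isSymmSndFDerivAt (by simp; norm_cast)
  simpa using hsymm.eq (1, 0) (0, 1)

end PartialDerivatives

section DerivRules

variable {F G : ℝ × ℝ → ℝ} {p : ℝ × ℝ}

theorem d1_add (hF : DifferentiableAt ℝ F p) (hG : DifferentiableAt ℝ G p) :
    d1 (fun q => F q + G q) p = d1 F p + d1 G p :=
  ((hasDerivAt_d1 hF).add (hasDerivAt_d1 hG)).deriv

theorem d2_add (hF : DifferentiableAt ℝ F p) (hG : DifferentiableAt ℝ G p) :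
    d2 (fun q => F q + G q) p = d2 F p + d2 G p :=
  ((hasDerivAt_d2 hF).add (hasDerivAt_d2 hG)).deriv

theorem d1_sub (hF : DifferentiableAt ℝ F p) (hG : DifferentiableAt ℝ G p) :
    d1 (fun q => F q - G q) p = d1 F p - d1 G p :=
  ((hasDerivAt_d1 hF).sub (hasDerivAt_d1 hG)).deriv

theorem d2_sub (hF : DifferentiableAt ℝ F p) (hG : DifferentiableAt ℝ G p) :
    d2 (fun q => F q - G q) p = d2 F p - d2 G p :=
  ((hasDerivAt_d2 hF).sub (hasDerivAt_d2 hG)).deriv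

theorem d1_mul (hF : DifferentiableAt ℝ F p) (hG : DifferentiableAt ℝ G p) :
    d1 (fun q => F q * G q) p = d1 F p * G p + F p * d1 G p :=
  ((hasDerivAt_d1 hF).mul (hasDerivAt_d1 hG)).deriv

theorem d2_mul (hF : DifferentiableAt ℝ F p) (hG : DifferentiableAt ℝ G p) :
    d2 (fun q => F q * G q) p = d2 F p * G p + F p * d2 G p :=
  ((hasDerivAt_d2 hF).mul (hasDerivAt_d2 hG)).deriv

theorem d1_div (hF : DifferentiableAt ℝ F p) (hG : DifferentiableAt ℝ G p) (hGp : G p ≠ 0) :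
    d1 (fun q => F q / G q) p = (d1 F p * G p - F p * d1 G p) / G p ^ 2 :=
  ((hasDerivAt_d1 hF).div (hasDerivAt_d1 hG) hGp).deriv

theorem d2_div (hF : DifferentiableAt ℝ F p) (hG : DifferentiableAt ℝ G p) (hGp : G p ≠ 0) :
    d2 (fun q => F q / G q) p = (d2 F p * G p - F p * d2 G p) / G p ^ 2 :=
  ((hasDerivAt_d2 hF).div (hasDerivAt_d2 hG) hGp).deriv

theorem d2_inv (hF : DifferentiableAt ℝ F p) (hFp : F p ≠ 0) :
    d2 (fun q => (F q)⁻¹) p = -d2 F p / F p ^ 2 :=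
  ((hasDerivAt_d2 hF).inv hFp).deriv

theorem d1_neg : d1 (fun q => -F q) p = -d1 F p := deriv.neg

theorem d2_neg : d2 (fun q => -F q) p = -d2 F p := deriv.neg

@[simp] theorem d1_fst : d1 Prod.fst p = 1 := by simp [d1]

@[simp] theorem d2_fst : d2 Prod.fst p = 0 := by simp [d2]

@[simp] theorem d1_snd : d1 Prod.snd p = 0 := by simp [d1]

@[simp] theorem d2_snd : d2 Prod.snd p = 1 := by simp [d2]

end DerivRules

section ChainRule

variable {m : ℕ} {g : (Fin (m + 2) → ℝ) → ℝ} {a : Fin (m + 2) → ℝ}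

theorem pdArg_eq_fderiv (hg : DifferentiableAt ℝ g a) (i : Fin (m + 2)) :
    pdArg g i a = fderiv ℝ g a (Pi.single i 1) := by
  have hg' : HasFDerivAt g (fderiv ℝ g a) (Function.update a i (a i)) := by
    rw [Function.update_eq_self]
    exact hg.hasFDerivAt
  exact (hg'.comp_hasDerivAt (a i) (hasDerivAt_update a i (a i))).deriv

theorem fderiv_apply_eq_sum_pdArg (hg : DifferentiableAt ℝ g a) (v : Fin (m + 2) → ℝ) :
    fderiv ℝ g a v = ∑ i, pdArg g i a * v i := by
  conv_lhs => rw [← Finset.univ_sum_single v]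
  refine (map_sum _ _ _).trans (Finset.sum_congr rfl fun i _ => ?_)
  rw [pdArg_eq_fderiv hg, mul_comm, ← smul_eq_mul, ← map_smul, ← Pi.single_smul', smul_eq_mul,
    mul_one]

variable {c : ℝ × ℝ → Fin (m + 2) → ℝ} {p : ℝ × ℝ}

theorem d1_comp (hg : DifferentiableAt ℝ g (c p))
    (hc : ∀ i, DifferentiableAt ℝ (fun q => c q i) p) :
    d1 (fun q => g (c q)) p = ∑ i, pdArg g i (c p) * d1 (fun q => c q i) p := by
  rw [← fderiv_apply_eq_sum_pdArg hg]
  exact (hg.hasFDerivAt.comp_hasDerivAt p.1 (hasDerivAt_pi.2 fun i => hasDerivAt_d1 (hc i))).deriv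

theorem d2_comp (hg : DifferentiableAt ℝ g (c p))
    (hc : ∀ i, DifferentiableAt ℝ (fun q => c q i) p) :
    d2 (fun q => g (c q)) p = ∑ i, pdArg g i (c p) * d2 (fun q => c q i) p := by
  rw [← fderiv_apply_eq_sum_pdArg hg]
  exact (hg.hasFDerivAt.comp_hasDerivAt p.2 (hasDerivAt_pi.2 fun i => hasDerivAt_d2 (hc i))).deriv

end ChainRule

noncomputable def charDeriv (h F : ℝ × ℝ → ℝ) : ℝ × ℝ → ℝ := fun q => d1 F q + h q * d2 F q

section CharDeriv

variable {h F G : ℝ × ℝ → ℝ} {U : Set (ℝ × ℝ)} {p : ℝ × ℝ}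

theorem Set.EqOn.charDeriv (hFG : EqOn F G U) (hU : IsOpen U) :
    EqOn (charDeriv h F) (charDeriv h G) U := fun _ hq => by
  simp only [_root_.charDeriv, hFG.d1 hU hq, hFG.d2 hU hq]

theorem charDeriv_add (hF : DifferentiableAt ℝ F p) (hG : DifferentiableAt ℝ G p) :
    charDeriv h (fun q => F q + G q) p = charDeriv h F p + charDeriv h G p := by
  simp only [charDeriv, d1_add hF hG, d2_add hF hG]
  ring

theorem charDeriv_sub (hF : DifferentiableAt ℝ F p) (hG : DifferentiableAt ℝ G p) :
    charDeriv h (fun q => F q - G q) p = charDeriv h F p - charDeriv h G p := by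
  simp only [charDeriv, d1_sub hF hG, d2_sub hF hG]
  ring

theorem charDeriv_mul (hF : DifferentiableAt ℝ F p) (hG : DifferentiableAt ℝ G p) :
    charDeriv h (fun q => F q * G q) p = charDeriv h F p * G p + F p * charDeriv h G p := by
  simp only [charDeriv, d1_mul hF hG, d2_mul hF hG]
  ring

theorem charDeriv_div (hF : DifferentiableAt ℝ F p) (hG : DifferentiableAt ℝ G p)
    (hGp : G p ≠ 0) :
    charDeriv h (fun q => F q / G q) p
      = (charDeriv h F p * G p - F p * charDeriv h G p) / G p ^ 2 := by
  simp only [charDeriv, d1_div hF hG hGp, d2_div hF hG hGp]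
  ring

theorem charDeriv_neg : charDeriv h (fun q => -F q) p = -charDeriv h F p := by
  simp only [charDeriv, d1_neg, d2_neg]
  ring

@[simp] theorem charDeriv_fst : charDeriv h Prod.fst p = 1 := by simp [charDeriv]

@[simp] theorem charDeriv_snd : charDeriv h Prod.snd p = h p := by simp [charDeriv]

theorem charDeriv_comp {m : ℕ} {g : (Fin (m + 2) → ℝ) → ℝ} {c : ℝ × ℝ → Fin (m + 2) → ℝ}
    (hg : DifferentiableAt ℝ g (c p)) (hc : ∀ i, DifferentiableAt ℝ (fun q => c q i) p) :
    charDeriv h (fun q => g (c q)) p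
      = ∑ i, pdArg g i (c p) * charDeriv h (fun q => c q i) p := by
  simp only [charDeriv, d1_comp hg hc, d2_comp hg hc, Finset.mul_sum, ← Finset.sum_add_distrib]
  exact Finset.sum_congr rfl fun _ _ => by ring

theorem charDeriv_d2 (hh : DifferentiableAt ℝ h p) (hF : ContDiffOn ℝ ∞ F U) (hU : IsOpen U)
    (hp : p ∈ U) : charDeriv h (d2 F) p = d2 (charDeriv h F) p - d2 h p * d2 F p := by
  have hd1F := (hF.d1 hU).differentiableAt_of_mem hU hp
  have hd2F := (hF.d2 hU).differentiableAt_of_mem hU hp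
  show d1 (d2 F) p + h p * d2 (d2 F) p = d2 (fun q => d1 F q + h q * d2 F q) p - _
  rw [d2_add (G := fun q => h q * d2 F q) hd1F (hh.mul hd2F), d2_mul hh hd2F,
    d1_d2_comm hF hU hp]
  ring

theorem charDeriv_d2_of_charDeriv_eq_zero (hh : DifferentiableAt ℝ h p)
    (hF : ContDiffOn ℝ ∞ F U) (hU : IsOpen U) (hDF : EqOn (charDeriv h F) 0 U) (hp : p ∈ U) :
    charDeriv h (d2 F) p = -(d2 h p * d2 F p) := by
  rw [charDeriv_d2 hh hF hU hp, d2_eq_zero_of_eqOn_zero hDF hU hp]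
  ring

theorem charDeriv_d2_of_charDeriv_eq_d2_mul (hh : ContDiffOn ℝ ∞ h U) (hF : ContDiffOn ℝ ∞ F U)
    (hU : IsOpen U) (hDF : EqOn (charDeriv h F) (fun q => d2 h q * F q) U) (hp : p ∈ U) :
    charDeriv h (d2 F) p = d2 (d2 h) p * F p := by
  rw [charDeriv_d2 (hh.differentiableAt_of_mem hU hp) hF hU hp, hDF.d2 hU hp,
    d2_mul ((hh.d2 hU).differentiableAt_of_mem hU hp) (hF.differentiableAt_of_mem hU hp)]
  ring

end CharDeriv

namespace IsBurgersSolOn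

variable {h R : ℝ × ℝ → ℝ} {U : Set (ℝ × ℝ)} {p : ℝ × ℝ}

theorem charDeriv_self (hh : IsBurgersSolOn h U) : EqOn (charDeriv h h) 0 U := hh.2

theorem d1_eq (hh : IsBurgersSolOn h U) (hp : p ∈ U) : d1 h p = -(h p * d2 h p) :=
  eq_neg_of_add_eq_zero_left (hh.2 p hp)

theorem d1_ne_zero_iff (hh : IsBurgersSolOn h U) (hp : p ∈ U) :
    d1 h p ≠ 0 ↔ h p ≠ 0 ∧ d2 h p ≠ 0 := by
  rw [hh.d1_eq hp, neg_ne_zero, mul_ne_zero_iff]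

theorem charDeriv_d2_self (hh : IsBurgersSolOn h U) (hU : IsOpen U) (hp : p ∈ U) :
    charDeriv h (d2 h) p = -(d2 h p * d2 h p) :=
  charDeriv_d2_of_charDeriv_eq_zero (hh.1.differentiableAt_of_mem hU hp) hh.1 hU
    hh.charDeriv_self hp

theorem charDeriv_d2_d2_self (hh : IsBurgersSolOn h U) (hU : IsOpen U) (hp : p ∈ U) :
    charDeriv h (d2 (d2 h)) p = -(3 * d2 h p * d2 (d2 h) p) := by
  have hd2 := (hh.1.d2 hU).differentiableAt_of_mem hU hp
  have hD : EqOn (charDeriv h (d2 h)) (fun q => -(d2 h q * d2 h q)) U := fun q hq =>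
    hh.charDeriv_d2_self hU hq
  rw [charDeriv_d2 (hh.1.differentiableAt_of_mem hU hp) (hh.1.d2 hU) hU hp, hD.d2 hU hp,
    d2_neg, d2_mul hd2 hd2]
  ring

theorem charDeriv_d2_div_d2_d2 (hh : IsBurgersSolOn h U) (hU : IsOpen U) (hp : p ∈ U)
    (hd2d2 : d2 (d2 h) p ≠ 0) :
    charDeriv h (fun q => d2 h q / d2 (d2 h) q) p = 2 * d2 h p ^ 2 / d2 (d2 h) p := by
  rw [charDeriv_div ((hh.1.d2 hU).differentiableAt_of_mem hU hp)
    (((hh.1.d2 hU).d2 hU).differentiableAt_of_mem hU hp) hd2d2,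
    hh.charDeriv_d2_self hU hp, hh.charDeriv_d2_d2_self hU hp]
  field_simp
  ring

theorem charDeriv_d2_add_div_mul_d2 (hh : IsBurgersSolOn h U) (hU : IsOpen U)
    (hd2d2 : ∀ q ∈ U, d2 (d2 h) q ≠ 0) (hR : ContDiffOn ℝ ∞ R U)
    (hDR : EqOn (charDeriv h R) 0 U) (hp : p ∈ U) :
    charDeriv h (d2 (fun q => R q + d2 h q / d2 (d2 h) q * d2 R q)) p = 0 := by
  set T : ℝ × ℝ → ℝ := fun q => d2 h q / d2 (d2 h) q * d2 R q with hT_def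
  have hT : ContDiffOn ℝ ∞ T U := ((hh.1.d2 hU).div ((hh.1.d2 hU).d2 hU) hd2d2).mul (hR.d2 hU)
  have hDT : EqOn (charDeriv h T) (fun q => d2 h q * T q) U := fun q hq => by
    rw [hT_def, charDeriv_mul (F := fun q => d2 h q / d2 (d2 h) q)
      (((hh.1.d2 hU).div ((hh.1.d2 hU).d2 hU) hd2d2).differentiableAt_of_mem hU hq)
      ((hR.d2 hU).differentiableAt_of_mem hU hq), hh.charDeriv_d2_div_d2_d2 hU hq (hd2d2 q hq),
      charDeriv_d2_of_charDeriv_eq_zero (hh.1.differentiableAt_of_mem hU hq) hR hU hDR hq]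
    field_simp
    ring
  have hd2_add : EqOn (d2 (fun q => R q + T q)) (fun q => d2 R q + d2 T q) U := fun q hq =>
    d2_add (hR.differentiableAt_of_mem hU hq) (hT.differentiableAt_of_mem hU hq)
  rw [hd2_add.charDeriv hU hp, charDeriv_add ((hR.d2 hU).differentiableAt_of_mem hU hp)
    ((hT.d2 hU).differentiableAt_of_mem hU hp),
    charDeriv_d2_of_charDeriv_eq_zero (hh.1.differentiableAt_of_mem hU hp) hR hU hDR hp,
    charDeriv_d2_of_charDeriv_eq_d2_mul hh.1 hT hU hDT hp, hT_def]
  field_simp [hd2d2 p hp]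
  ring

end IsBurgersSolOn

theorem IsRedSolOn.isBurgersSolOn_d2_d2 {w : ℝ × ℝ → ℝ} {U : Set (ℝ × ℝ)}
    (hw : IsRedSolOn w U) (hU : IsOpen U) : IsBurgersSolOn (d2 (d2 w)) U :=
  ⟨(hw.1.d2 hU).d2 hU, hw.2⟩

theorem IsGenSymCharOn.of_charDeriv_d2 {w f : ℝ × ℝ → ℝ} {U : Set (ℝ × ℝ)} (hU : IsOpen U)
    (hf : EqOn (charDeriv (d2 (d2 w)) (d2 f)) 0 U) : IsGenSymCharOn w f U :=
  fun _ hp => d2_eq_zero_of_eqOn_zero hf hU hp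

section ThetaSeq

variable {w : ℝ × ℝ → ℝ} {U : Set (ℝ × ℝ)} {q : ℝ × ℝ}

theorem thetaSeq_succ_eq (hh : IsBurgersSolOn (d2 (d2 w)) U) (hq : q ∈ U)
    (hq0 : d2 (d2 w) q ≠ 0) (k : ℕ) :
    thetaSeq w (k + 1) q = -(d2 (thetaSeq w k) q / d2 (d2 (d2 w)) q) := by
  show d2 (d2 w) q / d1 (d2 (d2 w)) q * d2 (thetaSeq w k) q = _
  rw [hh.d1_eq hq, div_neg, div_mul_cancel_left₀ hq0]
  ring

theorem contDiffOn_thetaSeq (hh : IsBurgersSolOn (d2 (d2 w)) U) (hU : IsOpen U)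
    (hne : ∀ q ∈ U, d1 (d2 (d2 w)) q ≠ 0) : ∀ k, ContDiffOn ℝ ∞ (thetaSeq w k) U
  | 0 => contDiffOn_snd.sub (contDiffOn_fst.mul hh.1)
  | k + 1 => (hh.1.div (hh.1.d1 hU) hne).mul ((contDiffOn_thetaSeq hh hU hne k).d2 hU)

theorem d2_thetaSeq (hh : IsBurgersSolOn (d2 (d2 w)) U) (hq : q ∈ U)
    (hne : d1 (d2 (d2 w)) q ≠ 0) (k : ℕ) :
    d2 (thetaSeq w k) q = -(d2 (d2 (d2 w)) q * thetaSeq w (k + 1) q) := by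
  obtain ⟨hq0, hq1⟩ := (hh.d1_ne_zero_iff hq).1 hne
  rw [thetaSeq_succ_eq hh hq hq0]
  field_simp

theorem charDeriv_thetaSeq (hh : IsBurgersSolOn (d2 (d2 w)) U) (hU : IsOpen U)
    (hne : ∀ q ∈ U, d1 (d2 (d2 w)) q ≠ 0) :
    ∀ k, EqOn (charDeriv (d2 (d2 w)) (thetaSeq w k)) 0 U
  | 0 => fun q hq => by
    have hh' := hh.1.differentiableAt_of_mem hU hq
    show charDeriv _ (fun p => p.2 - p.1 * d2 (d2 w) p) q = 0
    rw [charDeriv_sub (G := fun p => p.1 * d2 (d2 w) p) differentiableAt_snd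
        (differentiableAt_fst.mul hh'),
      charDeriv_mul differentiableAt_fst hh', hh.charDeriv_self hq]
    simp
  | k + 1 => fun q hq => by
    obtain ⟨-, hq1⟩ := (hh.d1_ne_zero_iff hq).1 (hne q hq)
    have hrec : EqOn (thetaSeq w (k + 1))
        (fun q => -(d2 (thetaSeq w k) q / d2 (d2 (d2 w)) q)) U := fun q hq =>
      thetaSeq_succ_eq hh hq ((hh.d1_ne_zero_iff hq).1 (hne q hq)).1 k
    rw [hrec.charDeriv hU hq, charDeriv_neg,
      charDeriv_div (((contDiffOn_thetaSeq hh hU hne k).d2 hU).differentiableAt_of_mem hU hq)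
        ((hh.1.d2 hU).differentiableAt_of_mem hU hq) hq1,
      charDeriv_d2_of_charDeriv_eq_zero (hh.1.differentiableAt_of_mem hU hq)
        (contDiffOn_thetaSeq hh hU hne k) hU (charDeriv_thetaSeq hh hU hne k) hq,
      hh.charDeriv_d2_self hU hq]
    simp only [Pi.zero_apply]
    ring

theorem thetaSeq_two_eq (hh : IsBurgersSolOn (d2 (d2 w)) U) (hU : IsOpen U)
    (hne : ∀ q ∈ U, d1 (d2 (d2 w)) q ≠ 0) (hq : q ∈ U) :
    thetaSeq w 2 q = -(d2 (d2 (d2 (d2 w))) q / d2 (d2 (d2 w)) q ^ 3) := by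
  have hθ1 : EqOn (thetaSeq w 1) (fun q => q.1 - (d2 (d2 (d2 w)) q)⁻¹) U := fun q hq => by
    obtain ⟨hq0, hq1⟩ := (hh.d1_ne_zero_iff hq).1 (hne q hq)
    have hh' := hh.1.differentiableAt_of_mem hU hq
    rw [thetaSeq_succ_eq hh hq hq0]
    show -(d2 (fun p => p.2 - p.1 * d2 (d2 w) p) q / _) = _
    rw [d2_sub (G := fun p => p.1 * d2 (d2 w) p) differentiableAt_snd
      (differentiableAt_fst.mul hh'), d2_mul differentiableAt_fst hh', d2_fst, d2_snd]
    field_simp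
    ring
  obtain ⟨hq0, hq1⟩ := (hh.d1_ne_zero_iff hq).1 (hne q hq)
  have hd2 := (hh.1.d2 hU).differentiableAt_of_mem hU hq
  rw [thetaSeq_succ_eq hh hq hq0, hθ1.d2 hU hq,
    d2_sub (G := fun q => (d2 (d2 (d2 w)) q)⁻¹) differentiableAt_fst (hd2.inv hq1),
    d2_inv hd2 hq1, d2_fst]
  field_simp
  ring

theorem div_d1_mul_thetaSeq_two_eq (hh : IsBurgersSolOn (d2 (d2 w)) U) (hU : IsOpen U)
    (hne : ∀ q ∈ U, d1 (d2 (d2 w)) q ≠ 0) (hq : q ∈ U) :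
    d2 (d2 w) q / (d1 (d2 (d2 w)) q * thetaSeq w 2 q)
      = d2 (d2 (d2 w)) q ^ 2 / d2 (d2 (d2 (d2 w))) q := by
  obtain ⟨hq0, hq1⟩ := (hh.d1_ne_zero_iff hq).1 (hne q hq)
  rw [hh.d1_eq hq, thetaSeq_two_eq hh hU hne hq]
  field_simp

end ThetaSeq

section Argvec

variable {w : ℝ × ℝ → ℝ} {U : Set (ℝ × ℝ)} {m : ℕ} {ϱ : (Fin (m + 2) → ℝ) → ℝ}

theorem contDiffOn_argvec_apply (hh : IsBurgersSolOn (d2 (d2 w)) U) (hU : IsOpen U)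
    (hne : ∀ q ∈ U, d1 (d2 (d2 w)) q ≠ 0) (i : Fin (m + 2)) :
    ContDiffOn ℝ ∞ (fun q => argvec w m q i) U := by
  cases i using Fin.cases with
  | zero => simpa [argvec] using hh.1
  | succ j => simpa [argvec] using contDiffOn_thetaSeq hh hU hne j

theorem charDeriv_argvec_apply (hh : IsBurgersSolOn (d2 (d2 w)) U) (hU : IsOpen U)
    (hne : ∀ q ∈ U, d1 (d2 (d2 w)) q ≠ 0) (i : Fin (m + 2)) :
    EqOn (charDeriv (d2 (d2 w)) (fun q => argvec w m q i)) 0 U := by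
  cases i using Fin.cases with
  | zero => simpa [argvec] using hh.charDeriv_self
  | succ j => simpa [argvec] using charDeriv_thetaSeq hh hU hne j

theorem contDiffOn_comp_argvec (hh : IsBurgersSolOn (d2 (d2 w)) U) (hU : IsOpen U)
    (hne : ∀ q ∈ U, d1 (d2 (d2 w)) q ≠ 0) (hϱ : ContDiff ℝ ∞ ϱ) :
    ContDiffOn ℝ ∞ (fun q => ϱ (argvec w m q)) U :=
  hϱ.comp_contDiffOn (contDiffOn_pi.2 (contDiffOn_argvec_apply hh hU hne))

theorem charDeriv_comp_argvec (hh : IsBurgersSolOn (d2 (d2 w)) U) (hU : IsOpen U)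
    (hne : ∀ q ∈ U, d1 (d2 (d2 w)) q ≠ 0) (hϱ : ContDiff ℝ ∞ ϱ) :
    EqOn (charDeriv (d2 (d2 w)) (fun q => ϱ (argvec w m q))) 0 U := fun q hq => by
  rw [charDeriv_comp (hϱ.differentiable (by simp) _)
    fun i => (contDiffOn_argvec_apply hh hU hne i).differentiableAt_of_mem hU hq]
  simp [charDeriv_argvec_apply hh hU hne _ hq]

theorem d2_comp_argvec (hh : IsBurgersSolOn (d2 (d2 w)) U) (hU : IsOpen U)
    (hne : ∀ q ∈ U, d1 (d2 (d2 w)) q ≠ 0) (hϱ : ContDiff ℝ ∞ ϱ) {q : ℝ × ℝ} (hq : q ∈ U) :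
    d2 (fun q => ϱ (argvec w m q)) q = d2 (d2 (d2 w)) q * (pdArg ϱ 0 (argvec w m q)
      - ∑ k : Fin (m + 1), thetaSeq w (k + 1) q * pdArg ϱ k.succ (argvec w m q)) := by
  have h0 : (fun q => argvec w m q 0) = d2 (d2 w) := rfl
  have hsucc (j : Fin (m + 1)) : (fun q => argvec w m q j.succ) = thetaSeq w j := rfl
  rw [d2_comp (hϱ.differentiable (by simp) _)
    fun i => (contDiffOn_argvec_apply hh hU hne i).differentiableAt_of_mem hU hq,
    Fin.sum_univ_succ, h0]
  simp only [hsucc, d2_thetaSeq hh hq (hne q hq), mul_sub, Finset.mul_sum, mul_neg,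
    Finset.sum_neg_distrib, ← sub_eq_add_neg]
  congr 1
  · ring
  · exact Finset.sum_congr rfl fun _ _ => by ring

end Argvec

theorem statement10_general (U : Set (ℝ × ℝ)) (hU : IsOpen U) (w : ℝ × ℝ → ℝ)
    (hred : IsRedSolOn w U)
    (h122 : ∀ p ∈ U, d1 (d2 (d2 w)) p ≠ 0)
    (hθ2 : ∀ p ∈ U, thetaSeq w 2 p ≠ 0)
    (m : ℕ) (ϱ : (Fin (m + 2) → ℝ) → ℝ) (hϱ : ContDiff ℝ (⊤ : ℕ∞) ϱ) :
    IsGenSymCharOn w (fun p =>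
      d2 (d2 w) p / (d1 (d2 (d2 w)) p * thetaSeq w 2 p) *
          (pdArg ϱ 0 (argvec w m p)
            - ∑ k : Fin (m + 1), thetaSeq w (k + 1) p * pdArg ϱ k.succ (argvec w m p))
        + ϱ (argvec w m p)) U := by
  have hh := hred.isBurgersSolOn_d2_d2 hU
  have hd2d2 : ∀ p ∈ U, d2 (d2 (d2 (d2 w))) p ≠ 0 := fun p hp hp0 =>
    hθ2 p hp (by rw [thetaSeq_two_eq hh hU h122 hp, hp0, zero_div, neg_zero])
  have hf : EqOn (fun p => d2 (d2 w) p / (d1 (d2 (d2 w)) p * thetaSeq w 2 p) *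
        (pdArg ϱ 0 (argvec w m p)
          - ∑ k : Fin (m + 1), thetaSeq w (k + 1) p * pdArg ϱ k.succ (argvec w m p))
        + ϱ (argvec w m p))
      (fun p => ϱ (argvec w m p) + d2 (d2 (d2 w)) p / d2 (d2 (d2 (d2 w))) p *
        d2 (fun q => ϱ (argvec w m q)) p) U := fun p hp => by
    dsimp only
    rw [div_d1_mul_thetaSeq_two_eq hh hU h122 hp, d2_comp_argvec hh hU h122 hϱ hp]
    ring
  refine IsGenSymCharOn.of_charDeriv_d2 hU (((hf.d2 hU).charDeriv hU).trans fun p hp => ?_)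
  exact hh.charDeriv_d2_add_div_mul_d2 hU hd2d2 (contDiffOn_comp_argvec hh hU h122 hϱ)
    (charDeriv_comp_argvec hh hU h122 hϱ) hp

/-- The family of generalized-symmetry characteristics of the reduced
equation parameterized by an arbitrary smooth function `ϱ̂` of `∂₂²w` and `θ⁰, …, θ^m`. -/
theorem statement10 (U : Set (ℝ × ℝ)) (hU : IsOpen U) (w : ℝ × ℝ → ℝ)
    (hred : IsRedSolOn w U)
    (h22 : ∀ p ∈ U, d2 (d2 w) p ≠ 0) (h122 : ∀ p ∈ U, d1 (d2 (d2 w)) p ≠ 0)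
    (hθ2 : ∀ p ∈ U, thetaSeq w 2 p ≠ 0)
    (m : ℕ) (ϱ : (Fin (m + 2) → ℝ) → ℝ) (hϱ : ContDiff ℝ (⊤ : ℕ∞) ϱ) :
    IsGenSymCharOn w (fun p =>
      d2 (d2 w) p / (d1 (d2 (d2 w)) p * thetaSeq w 2 p) *
          (pdArg ϱ 0 (argvec w m p)
            - ∑ k : Fin (m + 1), thetaSeq w (k + 1) p * pdArg ϱ k.succ (argvec w m p))
        + ϱ (argvec w m p)) U :=
  statement10_general U hU w hred h122 hθ2 m ϱ hϱ
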